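/- Every subset X ⊆ 2^ω of cardinality continuum contains a subset X' of cardinality continuum that is 𝔠-transitive-s₀: for every perfect tree p there is a perfect subtree q ≤ p such that for every t ∈ 2^ω, |([q] + t) ∩ X'| < 𝔠. -/

import Mathlib

open Cardinal

abbrev Cantor : Type := ℕ → Bool

def cAdd (x y : Cantor) : Cantor := fun n => xor (x n) (y n)

def setAdd (X Y : Set Cantor) : Set Cantor := Set.image2 cAdd X Y

def IsTree (p : Set (List Bool)) : Prop := ∀ σ ∈ p, ∀ τ : List Bool, τ <+: σ → τ ∈ p

def Splits (p : Set (List Bool)) (σ : List Bool) : Prop :=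
  σ ++ [false] ∈ p ∧ σ ++ [true] ∈ p

def PerfTree (p : Set (List Bool)) : Prop :=
  p.Nonempty ∧ IsTree p ∧ ∀ σ ∈ p, ∃ τ ∈ p, σ <+: τ ∧ Splits p τ

def seg (x : Cantor) (n : ℕ) : List Bool := List.ofFn (fun i : Fin n => x i)

def body (p : Set (List Bool)) : Set Cantor := { x | ∀ n, seg x n ∈ p }

def shiftNode (t : Cantor) (σ : List Bool) : List Bool :=
  σ.mapIdx fun i b => xor b (t i)

def treeAdd (p : Set (List Bool)) (t : Cantor) : Set (List Bool) := shiftNode t '' p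

def SkewT (p : Set (List Bool)) : Prop :=
  ∀ σ ∈ p, ∀ τ ∈ p, Splits p σ → Splits p τ → σ.length = τ.length → σ = τ

def PerfectSet (P : Set Cantor) : Prop := Perfect P ∧ P.Nonempty

def MarczewskiNull (Y : Set Cantor) : Prop :=
  ∀ P : Set Cantor, PerfectSet P → ∃ Q, PerfectSet Q ∧ Q ⊆ P ∧ Q ∩ Y = ∅

def MarczewskiNullT (Y : Set Cantor) : Prop :=
  ∀ p, PerfTree p → ∃ q, PerfTree q ∧ q ⊆ p ∧ body q ∩ Y = ∅

def Shiftable (X : Set Cantor) : Prop :=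
  ∀ Y, MarczewskiNull Y → setAdd X Y ≠ Set.univ

/-!
Fix a maximal family `𝒜` of perfect sets that are *skew* (they meet each nontrivial translate of
themselves in a countable set; bodies of trees with at most one splitting node per level are
skew) and whose translates pairwise meet in countable sets. Maximality makes every perfect set
contain a perfect subset of a translate `B + u` with `B ∈ 𝒜`.

If every such translate meets `X` in fewer than `𝔠` points, `X` itself works. Otherwise some
`X ∩ (B₀ + u₀)` has size `𝔠`; shifted into `B₀` it contains, by a transfinite construction of
length `𝔠`, a set `Z'` of size `𝔠` that is `𝔠`-s₀. Then `X' = Z' + u₀` works: for a perfect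
`D ⊆ B ∈ 𝒜`, the translate `D + v` meets `B₀` in a countable set unless `B = B₀` and `v = 0`, and
in that case shrinking `D` makes `D ∩ Z'` small.
-/

open Set Function PiNat Topology

universe u

section Translation

def cZero : Cantor := fun _ => false

/-- `xorShift t '' A` is the translate `A + t`. -/
def xorShift (u : Cantor) : Cantor ≃ₜ Cantor where
  toFun x := cAdd x u
  invFun x := cAdd x u
  left_inv x := by funext n; simp [cAdd]
  right_inv x := by funext n; simp [cAdd]
  continuous_toFun := by unfold cAdd; fun_prop
  continuous_invFun := by unfold cAdd; fun_prop

@[simp] lemma xorShift_apply (u x : Cantor) : xorShift u x = cAdd x u := rfl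

@[simp] lemma xorShift_symm (u : Cantor) : (xorShift u).symm = xorShift u := rfl

lemma xorShift_xorShift (u v x : Cantor) : xorShift v (xorShift u x) = xorShift (cAdd u v) x := by
  funext n; simp [cAdd]

@[simp] lemma xorShift_cZero : xorShift cZero = Homeomorph.refl Cantor := by
  ext x n; simp [cAdd, cZero]

lemma cAdd_self (u : Cantor) : cAdd u u = cZero := by
  funext n; simp [cAdd, cZero]

lemma cAdd_cAdd_cancel (u t : Cantor) : cAdd u (cAdd t u) = t := by
  funext n; simp only [cAdd]; cases u n <;> cases t n <;> rfl

lemma mem_image_xorShift {u x : Cantor} {A : Set Cantor} :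
    x ∈ xorShift u '' A ↔ xorShift u x ∈ A := by
  rw [Homeomorph.image_eq_preimage_symm, xorShift_symm, mem_preimage]

lemma image_xorShift_subset_iff {u : Cantor} {A B : Set Cantor} :
    xorShift u '' A ⊆ B ↔ A ⊆ xorShift u '' B := by
  rw [image_subset_iff, Homeomorph.image_eq_preimage_symm, xorShift_symm]

lemma image_xorShift_image (u v : Cantor) (A : Set Cantor) :
    xorShift v '' (xorShift u '' A) = xorShift (cAdd u v) '' A := by
  rw [image_image]; simp only [xorShift_xorShift]

@[simp] lemma image_xorShift_image_self (u : Cantor) (A : Set Cantor) :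
    xorShift u '' (xorShift u '' A) = A := by
  rw [image_xorShift_image, cAdd_self]; simp

lemma mk_image_xorShift (u : Cantor) (A : Set Cantor) : #(xorShift u '' A) = #A :=
  Cardinal.mk_image_eq (xorShift u).injective

lemma image_xorShift_inter (u : Cantor) (A B : Set Cantor) :
    xorShift u '' (A ∩ xorShift u '' B) = xorShift u '' A ∩ B := by
  rw [image_inter (xorShift u).injective, image_xorShift_image_self]

end Translation

section PerfectSets

lemma Perfect.image_of_isClosedEmbedding {α β : Type*} [TopologicalSpace α] [TopologicalSpace β]
    {f : α → β} (hf : IsClosedEmbedding f) {C : Set α} (hC : Perfect C) : Perfect (f '' C) := by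
  refine ⟨hf.isClosedMap C hC.closed, preperfect_iff_nhds.2 ?_⟩
  rintro _ ⟨x, hx, rfl⟩ U hU
  obtain ⟨y, ⟨hyU, hyC⟩, hyx⟩ := preperfect_iff_nhds.1 hC.acc x hx _
    (hf.continuous.continuousAt.preimage_mem_nhds hU)
  exact ⟨f y, ⟨hyU, mem_image_of_mem f hyC⟩, hf.injective.ne hyx⟩

lemma PerfectSet.image_xorShift {A : Set Cantor} (hA : PerfectSet A) (u : Cantor) :
    PerfectSet (xorShift u '' A) :=
  ⟨hA.1.image_of_isClosedEmbedding (xorShift u).isClosedEmbedding, hA.2.image _⟩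

lemma Set.Countable.mk_lt_continuum {α : Type*} {S : Set α} (h : S.Countable) : #S < 𝔠 :=
  h.le_aleph0.trans_lt Cardinal.aleph0_lt_continuum

lemma mk_cantor : #Cantor = 𝔠 := by simp

lemma exists_cylinder_subset {E : ℕ → Type*} [∀ n, TopologicalSpace (E n)]
    [∀ n, DiscreteTopology (E n)] {x : ∀ n, E n} {U : Set (∀ n, E n)} (hU : U ∈ 𝓝 x) :
    ∃ n, cylinder x n ⊆ U := by
  obtain ⟨_, ⟨y, n, rfl⟩, hxy, hyU⟩ := (isTopologicalBasis_cylinders _).mem_nhds_iff.1 hU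
  exact ⟨n, mem_cylinder_iff_eq.1 hxy ▸ hyU⟩

lemma perfect_univ : Perfect (univ : Set Cantor) := by
  refine ⟨isClosed_univ, preperfect_iff_nhds.2 fun x _ U hU => ?_⟩
  obtain ⟨n, hn⟩ := exists_cylinder_subset hU
  exact ⟨update x n (!x n), ⟨hn (update_mem_cylinder x n _), trivial⟩,
    fun h => by simpa using congrFun h n⟩

def interleave (w y : Cantor) : Cantor := fun k => if k % 2 = 0 then w (k / 2) else y (k / 2)

lemma continuous_interleave (w : Cantor) : Continuous (interleave w) :=
  continuous_pi fun k => by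
    unfold interleave
    split_ifs
    exacts [continuous_const, continuous_apply _]

lemma interleave_even (w y : Cantor) (n : ℕ) : interleave w y (2 * n) = w n := by
  simp [interleave]

lemma interleave_odd (w y : Cantor) (n : ℕ) : interleave w y (2 * n + 1) = y n := by
  simp [interleave, Nat.add_mod, Nat.add_div]

lemma PerfectSet.exists_pairwise_disjoint {C : Set Cantor} (hC : PerfectSet C) :
    ∃ V : Cantor → Set Cantor, (∀ w, PerfectSet (V w) ∧ V w ⊆ C) ∧ Pairwise (Disjoint on V) := by
  obtain ⟨f, hfC, hf, hfinj⟩ : ∃ f : Cantor → Cantor, range f ⊆ C ∧ Continuous f ∧ f.Injective := by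
    let := PiNat.metricSpace (E := fun _ : ℕ => Bool)
    exact hC.1.exists_nat_bool_injection hC.2
  refine ⟨fun w => f ∘ interleave w '' univ, fun w => ⟨⟨?_, univ_nonempty.image _⟩, ?_⟩, ?_⟩
  · refine perfect_univ.image_of_isClosedEmbedding
      ((hf.comp (continuous_interleave w)).isClosedEmbedding ?_)
    exact hfinj.comp fun y y' h => funext fun n => by
      simpa only [interleave_odd] using congrFun h (2 * n + 1)
  · rintro _ ⟨y, -, rfl⟩
    exact hfC (mem_range_self _)
  · intro w w' hne
    refine disjoint_left.2 ?_
    rintro _ ⟨y, -, rfl⟩ ⟨y', -, h⟩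
    refine hne (funext fun n => ?_)
    simpa only [interleave_even] using (congrFun (hfinj h) (2 * n)).symm

lemma PerfectSet.exists_subset_disjoint {C T : Set Cantor} (hC : PerfectSet C) (hT : #T < 𝔠) :
    ∃ D ⊆ C, PerfectSet D ∧ Disjoint D T := by
  obtain ⟨V, hV, hdisj⟩ := hC.exists_pairwise_disjoint
  by_contra! hmeet
  choose g hgV hgT using fun w => not_disjoint_iff.1 (hmeet (V w) (hV w).2 (hV w).1)
  have hg : g.Injective := fun w w' h => by
    by_contra hne
    exact disjoint_left.1 (hdisj hne) (hgV w) (h ▸ hgV w')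
  refine hT.not_ge ?_
  rw [← mk_cantor]
  exact Cardinal.mk_le_of_injective (f := fun w => (⟨g w, hgT w⟩ : T))
    fun w w' h => hg (congrArg Subtype.val h)

end PerfectSets

section Trees

@[simp] lemma seg_length (x : Cantor) (n : ℕ) : (seg x n).length = n := by simp [seg]

lemma seg_eq_seg_iff {x y : Cantor} {n : ℕ} : seg y n = seg x n ↔ y ∈ cylinder x n := by
  rw [seg, seg, List.ofFn_inj, mem_cylinder_iff, funext_iff]
  exact ⟨fun h i hi => h ⟨i, hi⟩, fun h i => h i i.2⟩

lemma seg_succ (x : Cantor) (n : ℕ) : seg x (n + 1) = seg x n ++ [x n] := by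
  rw [seg, List.ofFn_succ']
  simp [seg]

lemma take_seg (x : Cantor) {m n : ℕ} (h : m ≤ n) : (seg x n).take m = seg x m :=
  List.ext_getElem (by simp [h]) fun i _ _ => by simp [seg]

lemma seg_prefix_seg (x : Cantor) {m n : ℕ} (h : m ≤ n) : seg x m <+: seg x n :=
  take_seg x h ▸ List.take_prefix _ _

lemma List.IsPrefix.eq_seg {τ : List Bool} {x : Cantor} {n : ℕ} (h : τ <+: seg x n) :
    τ = seg x τ.length := by
  have := List.prefix_iff_eq_take.1 h
  rwa [take_seg x (by simpa using h.length_le)] at this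

lemma seg_getD (τ : List Bool) : seg (fun i => τ.getD i false) τ.length = τ :=
  List.ext_getElem (by simp) fun i _ _ => by simp [seg]

lemma cylinder_mem_nhds {E : ℕ → Type*} [∀ n, TopologicalSpace (E n)]
    [∀ n, DiscreteTopology (E n)] (x : ∀ n, E n) (n : ℕ) : cylinder x n ∈ 𝓝 x :=
  (isOpen_cylinder _ x n).mem_nhds (self_mem_cylinder x n)

lemma isClopen_setOf_seg_mem (n : ℕ) (S : Set (List Bool)) :
    IsClopen {x : Cantor | seg x n ∈ S} := by
  have key : ∀ S : Set (List Bool), IsOpen {x : Cantor | seg x n ∈ S} := fun S =>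
    isOpen_iff_mem_nhds.2 fun x hx => Filter.mem_of_superset (cylinder_mem_nhds x n) fun y hy => by
        rwa [mem_ofPred_eq, seg_eq_seg_iff.2 hy]
  exact ⟨isOpen_compl_iff.1 (key Sᶜ), key S⟩

lemma isClosed_body (p : Set (List Bool)) : IsClosed (body p) := by
  simpa only [body, ofPred_forall] using
    isClosed_iInter fun n => (isClopen_setOf_seg_mem n p).isClosed

lemma body_mono {p q : Set (List Bool)} (h : q ⊆ p) : body q ⊆ body p :=
  fun _ hx n => h (hx n)

def treeOf (A : Set Cantor) : Set (List Bool) := {σ | ∃ x ∈ A, seg x σ.length = σ}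

lemma seg_mem_treeOf {A : Set Cantor} {x : Cantor} (hx : x ∈ A) (n : ℕ) :
    seg x n ∈ treeOf A :=
  ⟨x, hx, by simp⟩

lemma subset_body_treeOf (A : Set Cantor) : A ⊆ body (treeOf A) :=
  fun _ hx n => seg_mem_treeOf hx n

lemma treeOf_subset {A : Set Cantor} {p : Set (List Bool)} (h : A ⊆ body p) : treeOf A ⊆ p := by
  rintro σ ⟨x, hx, hσ⟩
  exact hσ ▸ h hx _

lemma body_treeOf {A : Set Cantor} (hA : IsClosed A) : body (treeOf A) = A := by
  refine subset_antisymm (fun x hx => ?_) (subset_body_treeOf A)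
  by_contra hxA
  obtain ⟨n, hn⟩ := exists_disjoint_cylinder hA hxA
  obtain ⟨y, hy, hseg⟩ := hx n
  exact disjoint_left.1 hn hy (seg_eq_seg_iff.1 (by simpa using hseg))

lemma mk_setOf_isClosed_le : #{K : Set Cantor | IsClosed K} ≤ 𝔠 := by
  calc #{K : Set Cantor | IsClosed K} ≤ #(Set (List Bool)) :=
        Cardinal.mk_le_of_injective (f := fun K => treeOf K.1) fun K K' h => Subtype.ext <| by
          simpa only [body_treeOf K.2, body_treeOf K'.2] using congrArg body h
    _ = 𝔠 := by simp

lemma splits_seg {p : Set (List Bool)} {x y : Cantor} {k : ℕ} (hx : x ∈ body p)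
    (hy : y ∈ body p) (hxy : y ∈ cylinder x k) (hk : x k ≠ y k) : Splits p (seg x k) := by
  have hmem : ∀ b, b = x k ∨ b = y k → seg x k ++ [b] ∈ p := by
    rintro b (rfl | rfl)
    · exact seg_succ x k ▸ hx (k + 1)
    · exact seg_eq_seg_iff.2 hxy ▸ seg_succ y k ▸ hy (k + 1)
  have hb : ∀ b, b = x k ∨ b = y k := fun b => by
    revert hk; cases b <;> cases x k <;> cases y k <;> simp
  exact ⟨hmem _ (hb false), hmem _ (hb true)⟩

lemma PerfectSet.perfTree_treeOf {A : Set Cantor} (hA : PerfectSet A) : PerfTree (treeOf A) := by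
  obtain ⟨x₀, hx₀⟩ := hA.2
  refine ⟨⟨[], seg_mem_treeOf hx₀ 0⟩, ?_, ?_⟩
  · rintro σ ⟨x, hx, hσ⟩ τ hτ
    rw [← hσ] at hτ
    exact ⟨x, hx, hτ.eq_seg.symm⟩
  · rintro σ ⟨x, hx, hσ⟩
    obtain ⟨y, ⟨hy, hyA⟩, hyx⟩ := preperfect_iff_nhds.1 hA.1.acc x hx _
      (cylinder_mem_nhds x σ.length)
    have hlen : σ.length ≤ firstDiff x y :=
      firstDiff_comm y x ▸ (mem_cylinder_iff_le_firstDiff hyx _).1 hy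
    exact ⟨_, seg_mem_treeOf hx _, hσ ▸ seg_prefix_seg x hlen,
      splits_seg (subset_body_treeOf A hx) (subset_body_treeOf A hyA)
        ((mem_cylinder_comm _ _ _).1 (mem_cylinder_firstDiff x y)) (apply_firstDiff_ne hyx.symm)⟩

lemma Splits.mem {p : Set (List Bool)} {σ : List Bool} (h : Splits p σ) (b : Bool) :
    σ ++ [b] ∈ p := by
  cases b
  exacts [h.1, h.2]

lemma PerfTree.nil_mem {p : Set (List Bool)} (hp : PerfTree p) : [] ∈ p :=
  let ⟨_, hσ⟩ := hp.1
  hp.2.1 _ hσ [] List.nil_prefix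

lemma PerfTree.exists_length_ge {p : Set (List Bool)} (hp : PerfTree p) {σ : List Bool}
    (hσ : σ ∈ p) (n : ℕ) : ∃ τ ∈ p, σ <+: τ ∧ n ≤ τ.length := by
  induction n with
  | zero => exact ⟨σ, hσ, List.prefix_rfl, Nat.zero_le _⟩
  | succ n ih =>
    obtain ⟨τ, hτ, hστ, hn⟩ := ih
    obtain ⟨τ', -, hττ', hsplit⟩ := hp.2.2 τ hτ
    refine ⟨τ' ++ [true], hsplit.2, (hστ.trans hττ').trans (List.prefix_append _ _), ?_⟩
    simpa using hn.trans hττ'.length_le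

lemma PerfTree.exists_splits_length_gt {p : Set (List Bool)} (hp : PerfTree p) {σ : List Bool}
    (hσ : σ ∈ p) (m : ℕ) : ∃ τ ∈ p, σ <+: τ ∧ Splits p τ ∧ m < τ.length := by
  obtain ⟨τ, hτ, hστ, hm⟩ := hp.exists_length_ge hσ (m + 1)
  obtain ⟨τ', hτ', hττ', hsplit⟩ := hp.2.2 τ hτ
  exact ⟨τ', hτ', hστ.trans hττ', hsplit, lt_of_lt_of_le hm hττ'.length_le⟩

lemma PerfTree.exists_mem_body {p : Set (List Bool)} (hp : PerfTree p) {σ : List Bool}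
    (hσ : σ ∈ p) : ∃ x ∈ body p, seg x σ.length = σ := by
  let K n := {x : Cantor | seg x σ.length ∈ ({σ} : Set _)} ∩ {x | seg x n ∈ p}
  have hclosed n : IsClosed (K n) :=
    (isClopen_setOf_seg_mem _ _).isClosed.inter (isClopen_setOf_seg_mem _ _).isClosed
  have hne n : (K n).Nonempty := by
    obtain ⟨τ, hτ, hστ, hn⟩ := hp.exists_length_ge hσ n
    rw [← seg_getD τ] at hστ hτ
    exact ⟨_, hστ.eq_seg.symm, hp.2.1 _ hτ _ (seg_prefix_seg _ (by simpa using hn))⟩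
  obtain ⟨x, hx⟩ := IsCompact.nonempty_iInter_of_sequence_nonempty_isCompact_isClosed K
    (fun n x hx => ⟨hx.1, hp.2.1 _ hx.2 _ (seg_prefix_seg x n.le_succ)⟩) hne
    (hclosed 0).isCompact hclosed
  rw [mem_iInter] at hx
  exact ⟨x, fun n => (hx n).2, (hx 0).1⟩

lemma PerfTree.perfectSet_body {p : Set (List Bool)} (hp : PerfTree p) : PerfectSet (body p) := by
  refine ⟨⟨isClosed_body p, preperfect_iff_nhds.2 fun x hx U hU => ?_⟩,
    (hp.exists_mem_body hp.nil_mem).imp fun _ h => h.1⟩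
  obtain ⟨n, hn⟩ := exists_cylinder_subset hU
  obtain ⟨τ, -, hxτ, hsplit⟩ := hp.2.2 _ (hx n)
  obtain ⟨y, hy, hyτ⟩ := hp.exists_mem_body (hsplit.mem (!x τ.length))
  rw [List.length_append, List.length_singleton, seg_succ] at hyτ
  obtain ⟨hyτ, hyb⟩ := List.append_inj' hyτ rfl
  have hxy : seg x n = seg y n := by
    rw [← hyτ] at hxτ
    simpa using hxτ.eq_seg
  refine ⟨y, ⟨hn (seg_eq_seg_iff.1 hxy.symm), hy⟩, fun h => ?_⟩
  simp [h] at hyb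

end Trees

section SkewTrees

lemma List.prefix_or_prefix_or_exists_branch :
    ∀ a b : List Bool, a <+: b ∨ b <+: a ∨ ∃ c x, c ++ [x] <+: a ∧ c ++ [!x] <+: b
  | [], _ => Or.inl List.nil_prefix
  | _ :: _, [] => Or.inr (Or.inl List.nil_prefix)
  | x :: a, y :: b => by
    by_cases hxy : x = y
    · subst hxy
      rcases List.prefix_or_prefix_or_exists_branch a b with h | h | ⟨c, z, hca, hcb⟩
      · exact Or.inl (List.cons_prefix_cons.2 ⟨rfl, h⟩)
      · exact Or.inr (Or.inl (List.cons_prefix_cons.2 ⟨rfl, h⟩))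
      · exact Or.inr (Or.inr ⟨x :: c, z, List.cons_prefix_cons.2 ⟨rfl, hca⟩,
          List.cons_prefix_cons.2 ⟨rfl, hcb⟩⟩)
    · refine Or.inr (Or.inr ⟨[], x, by simp, ?_⟩)
      cases x <;> cases y <;> simp_all

lemma List.eq_of_branch_prefix {σ τ A B : List Bool} {x y : Bool} (hσA : σ ++ [x] <+: A)
    (hσB : σ ++ [!x] <+: B) (hτA : τ ++ [y] <+: A) (hτB : τ ++ [!y] <+: B) : σ = τ := by
  have key : ∀ {σ τ : List Bool} {x y : Bool}, σ ++ [x] <+: A → σ ++ [!x] <+: B →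
      τ ++ [y] <+: A → τ ++ [!y] <+: B → ¬ σ.length < τ.length := by
    intro σ τ x y h₁ h₂ h₃ h₄ hlt
    have e₁ := List.prefix_of_prefix_length_le h₁ ((List.prefix_append τ [y]).trans h₃)
      (by simpa using hlt)
    have e₂ := List.prefix_of_prefix_length_le h₂ ((List.prefix_append τ [!y]).trans h₄)
      (by simpa using hlt)
    simpa using (List.prefix_of_prefix_length_le e₁ e₂ (by simp)).eq_of_length (by simp)
  exact (List.prefix_of_prefix_length_le ((List.prefix_append σ [x]).trans hσA)
    ((List.prefix_append τ [y]).trans hτA) (not_lt.1 (key hτA hτB hσA hσB))).eq_of_length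
    (le_antisymm (not_lt.1 (key hτA hτB hσA hσB)) (not_lt.1 (key hσA hσB hτA hτB)))

def downTree (s : List Bool → List Bool) : Set (List Bool) := {τ | ∃ ρ, τ <+: s ρ}

lemma prefix_apply_of_prefix {s : List Bool → List Bool}
    (hs : ∀ ρ b, s ρ ++ [b] <+: s (ρ ++ [b])) {ρ ρ' : List Bool} (h : ρ <+: ρ') :
    s ρ <+: s ρ' := by
  obtain ⟨l, rfl⟩ := h
  induction l using List.reverseRecOn with
  | nil => simp
  | append_singleton l b ih =>
    rw [← List.append_assoc]
    exact ih.trans ((List.prefix_append _ _).trans (hs _ b))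

lemma perfTree_downTree {s : List Bool → List Bool} (hs : ∀ ρ b, s ρ ++ [b] <+: s (ρ ++ [b])) :
    PerfTree (downTree s) :=
  ⟨⟨[], [], List.nil_prefix⟩, fun _ ⟨ρ, h⟩ _ hτ => ⟨ρ, hτ.trans h⟩,
    fun _ ⟨ρ, h⟩ => ⟨s ρ, ⟨ρ, List.prefix_rfl⟩, h, ⟨ρ ++ [false], hs ρ false⟩,
      ⟨ρ ++ [true], hs ρ true⟩⟩⟩

lemma exists_eq_of_splits_downTree {s : List Bool → List Bool}
    (hs : ∀ ρ b, s ρ ++ [b] <+: s (ρ ++ [b])) {σ : List Bool} (h : Splits (downTree s) σ) :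
    ∃ c, σ = s c := by
  obtain ⟨⟨a, ha⟩, ⟨b, hb⟩⟩ := h
  have hne : ∀ {c}, σ ++ [false] <+: c → σ ++ [true] <+: c → False := fun h₁ h₂ => by
    simpa using (List.prefix_of_prefix_length_le h₁ h₂ (by simp)).eq_of_length (by simp)
  rcases List.prefix_or_prefix_or_exists_branch a b with hab | hba | ⟨c, x, hca, hcb⟩
  · exact (hne (ha.trans (prefix_apply_of_prefix hs hab)) hb).elim
  · exact (hne ha (hb.trans (prefix_apply_of_prefix hs hba))).elim
  · exact ⟨c, List.eq_of_branch_prefix (x := false) ha hb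
      ((hs c x).trans (prefix_apply_of_prefix hs hca))
      ((hs c !x).trans (prefix_apply_of_prefix hs hcb))⟩

lemma skewT_downTree {s : List Bool → List Bool} (hs : ∀ ρ b, s ρ ++ [b] <+: s (ρ ++ [b]))
    (hlen : ∀ a b, (s a).length = (s b).length → s a = s b) : SkewT (downTree s) := by
  intro σ _ τ _ hσ hτ hl
  obtain ⟨a, rfl⟩ := exists_eq_of_splits_downTree hs hσ
  obtain ⟨b, rfl⟩ := exists_eq_of_splits_downTree hs hτ
  exact hlen a b hl

/-- Breadth-first numbering of binary addresses: the children of `k` are `2k + 1` and `2k + 2`. -/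
def heapIndex (ρ : List Bool) : ℕ := ρ.foldl (fun k b => Nat.bit b k + 1) 0

lemma heapIndex_append_singleton (ρ : List Bool) (b : Bool) :
    heapIndex (ρ ++ [b]) = Nat.bit b (heapIndex ρ) + 1 := by
  simp [heapIndex]

/-- Splitting nodes of `p` in breadth-first order, each longer than its predecessor, so that no
two of them have the same length. -/
noncomputable def PerfTree.splitNode {p : Set (List Bool)} (hp : PerfTree p) :
    ℕ → {τ // τ ∈ p ∧ Splits p τ}
  | 0 =>
    have h := hp.exists_splits_length_gt hp.nil_mem 0
    ⟨h.choose, h.choose_spec.1, h.choose_spec.2.2.1⟩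
  | n + 1 =>
    have h := hp.exists_splits_length_gt ((hp.splitNode n.div2).2.2.mem n.bodd)
      (hp.splitNode n).1.length
    ⟨h.choose, h.choose_spec.1, h.choose_spec.2.2.1⟩
termination_by n => n
decreasing_by all_goals first | omega | (rw [Nat.div2_val]; omega)

lemma PerfTree.splitNode_succ {p : Set (List Bool)} (hp : PerfTree p) (n : ℕ) :
    (hp.splitNode n.div2).1 ++ [n.bodd] <+: (hp.splitNode (n + 1)).1 ∧
      (hp.splitNode n).1.length < (hp.splitNode (n + 1)).1.length := by
  have h := hp.exists_splits_length_gt ((hp.splitNode n.div2).2.2.mem n.bodd)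
    (hp.splitNode n).1.length
  rw [PerfTree.splitNode]
  exact ⟨h.choose_spec.2.1, h.choose_spec.2.2.2⟩

lemma PerfTree.exists_skewT_subset {p : Set (List Bool)} (hp : PerfTree p) :
    ∃ q ⊆ p, PerfTree q ∧ SkewT q := by
  let s ρ := (hp.splitNode (heapIndex ρ)).1
  have hs : ∀ ρ b, s ρ ++ [b] <+: s (ρ ++ [b]) := fun ρ b => by
    simpa [s, heapIndex_append_singleton] using (hp.splitNode_succ (Nat.bit b (heapIndex ρ))).1
  have hmono : StrictMono fun n => (hp.splitNode n).1.length :=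
    strictMono_nat_of_lt_succ fun n => (hp.splitNode_succ n).2
  refine ⟨downTree s, ?_, perfTree_downTree hs, skewT_downTree hs fun a b h => ?_⟩
  · rintro σ ⟨ρ, h⟩
    exact hp.2.1 _ (hp.splitNode _).2.1 _ h
  · simp only [s, hmono.injective h]

lemma SkewT.finite_inter_image_xorShift {q : Set (List Bool)} (hq : SkewT q) {w : Cantor}
    (hw : w ≠ cZero) : (body q ∩ xorShift w '' body q).Finite := by
  obtain ⟨m, hm⟩ : ∃ m, w m = true := by
    by_contra! h
    exact hw (funext fun n => by simpa [cZero] using h n)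
  refine Finite.of_finite_image ((List.finite_length_eq Bool (m + 1)).subset
    (image_subset_iff.2 fun x _ => seg_length x _)) fun x hx y hy hxy => ?_
  by_contra hne
  set k := firstDiff x y
  have hyx : y ∈ cylinder x k := (mem_cylinder_comm _ _ _).1 (mem_cylinder_firstDiff x y)
  have hxk : x k ≠ y k := apply_firstDiff_ne hne
  have hmk : m < k := (mem_cylinder_iff_le_firstDiff hne _).1 (seg_eq_seg_iff.1 hxy)
  have hsplit := splits_seg hx.1 hy.1 hyx hxk
  have hsplit' : Splits q (seg (xorShift w x) k) :=
    splits_seg (mem_image_xorShift.1 hx.2) (mem_image_xorShift.1 hy.2)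
      (mem_cylinder_iff.2 fun i hi => by simp [cAdd, mem_cylinder_iff.1 hyx i hi])
      (by simpa [cAdd] using hxk)
  have hseg := hq _ (hx.1 k) _ (mem_image_xorShift.1 hx.2 k) hsplit hsplit' (by simp)
  have := mem_cylinder_iff.1 (seg_eq_seg_iff.1 hseg) m hmk
  simp [cAdd, hm] at this

end SkewTrees

section SkewFamilies

def IsSkewPerfect (B : Set Cantor) : Prop :=
  PerfectSet B ∧ ∀ w ≠ cZero, (B ∩ xorShift w '' B).Countable

lemma PerfectSet.exists_isSkewPerfect_subset {P : Set Cantor} (hP : PerfectSet P) :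
    ∃ S ⊆ P, IsSkewPerfect S := by
  obtain ⟨q, hqP, hq, hskew⟩ := hP.perfTree_treeOf.exists_skewT_subset
  exact ⟨body q, (body_mono hqP).trans (body_treeOf hP.1.closed).subset, hq.perfectSet_body,
    fun w hw => (hskew.finite_inter_image_xorShift hw).countable⟩

def TranslatesMeetCountably (A B : Set Cantor) : Prop := ∀ u, (A ∩ xorShift u '' B).Countable

lemma TranslatesMeetCountably.symm {A B : Set Cantor} (h : TranslatesMeetCountably A B) :
    TranslatesMeetCountably B A := fun u => by
  simpa only [image_xorShift_inter, inter_comm] using (h u).image (xorShift u)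

def IsSkewFamily (𝒜 : Set (Set Cantor)) : Prop :=
  (∀ B ∈ 𝒜, IsSkewPerfect B) ∧ 𝒜.Pairwise TranslatesMeetCountably

lemma exists_maximal_isSkewFamily : ∃ 𝒜, Maximal IsSkewFamily 𝒜 := by
  refine zorn_subset {𝒜 | IsSkewFamily 𝒜} fun c hc hchain =>
    ⟨⋃₀ c, ⟨fun B ⟨𝒜, h𝒜, hB⟩ => (hc h𝒜).1 B hB, ?_⟩, fun _ => subset_sUnion_of_mem⟩
  rintro B ⟨𝒜, h𝒜, hB⟩ B' ⟨𝒜', h𝒜', hB'⟩ hne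
  rcases hchain.total h𝒜 h𝒜' with h | h
  · exact (hc h𝒜').2 (h hB) hB' hne
  · exact (hc h𝒜).2 hB (h hB') hne

lemma IsSkewFamily.countable_image_xorShift_inter {𝒜 : Set (Set Cantor)} (h : IsSkewFamily 𝒜)
    {B B₀ : Set Cantor} (hB : B ∈ 𝒜) (hB₀ : B₀ ∈ 𝒜) {v : Cantor} (hv : B ≠ B₀ ∨ v ≠ cZero) :
    (xorShift v '' B ∩ B₀).Countable := by
  rw [inter_comm]
  by_cases hBB₀ : B = B₀
  · subst hBB₀
    exact (h.1 B hB).2 v (hv.resolve_left (not_not.2 rfl))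
  · exact h.2 hB₀ hB (Ne.symm hBB₀) v

lemma exists_subset_image_xorShift_of_maximal {𝒜 : Set (Set Cantor)}
    (h𝒜 : Maximal IsSkewFamily 𝒜) {P : Set Cantor} (hP : PerfectSet P) :
    ∃ B ∈ 𝒜, ∃ u, ∃ D ⊆ P, PerfectSet D ∧ D ⊆ xorShift u '' B := by
  obtain ⟨S, hSP, hS⟩ := hP.exists_isSkewPerfect_subset
  by_cases hS𝒜 : S ∈ 𝒜
  · exact ⟨S, hS𝒜, cZero, S, hSP, hS.1, by simp⟩
  obtain ⟨B, hB, u, hu⟩ : ∃ B ∈ 𝒜, ∃ u, ¬(S ∩ xorShift u '' B).Countable := by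
    by_contra! hcount
    refine hS𝒜 (h𝒜.2 ⟨?_, h𝒜.1.2.insert fun B hB _ =>
      ⟨hcount B hB, TranslatesMeetCountably.symm (hcount B hB)⟩⟩
      (subset_insert S 𝒜) (mem_insert S 𝒜))
    rintro B (rfl | hB)
    exacts [hS, h𝒜.1.1 B hB]
  obtain ⟨D, hD, hDne, hDsub⟩ := exists_perfect_nonempty_of_isClosed_of_not_countable
    (hS.1.1.closed.inter ((xorShift u).isClosedMap _ (h𝒜.1.1 B hB).1.1.closed)) hu
  exact ⟨B, hB, u, D, hDsub.trans (inter_subset_left.trans hSP), ⟨hD, hDne⟩,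
    hDsub.trans inter_subset_right⟩

end SkewFamilies

section TransitiveSZero

def IsContinuumSZero (Y : Set Cantor) : Prop :=
  ∀ P, PerfectSet P → ∃ Q ⊆ P, PerfectSet Q ∧ #(Q ∩ Y : Set Cantor) < 𝔠

def IsContinuumTransitiveSZero (Y : Set Cantor) : Prop :=
  ∀ P, PerfectSet P → ∃ Q ⊆ P, PerfectSet Q ∧ ∀ t, #(xorShift t '' Q ∩ Y : Set Cantor) < 𝔠

lemma IsContinuumTransitiveSZero.image_xorShift {Y : Set Cantor}
    (hY : IsContinuumTransitiveSZero Y) (u : Cantor) :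
    IsContinuumTransitiveSZero (xorShift u '' Y) := by
  intro P hP
  obtain ⟨Q, hQP, hQ, hsmall⟩ := hY _ (hP.image_xorShift u)
  refine ⟨xorShift u '' Q, image_xorShift_subset_iff.2 hQP, hQ.image_xorShift u, fun t => ?_⟩
  rw [← mk_image_xorShift u, image_xorShift_inter, image_xorShift_image, image_xorShift_image,
    cAdd_cAdd_cancel]
  exact hsmall t

lemma isContinuumTransitiveSZero_of_maximal {𝒜 : Set (Set Cantor)}
    (h𝒜 : Maximal IsSkewFamily 𝒜) {Y : Set Cantor}
    (hY : ∀ B ∈ 𝒜, ∀ D ⊆ B, PerfectSet D →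
      ∃ D₁ ⊆ D, PerfectSet D₁ ∧ ∀ v, #(xorShift v '' D₁ ∩ Y : Set Cantor) < 𝔠) :
    IsContinuumTransitiveSZero Y := by
  intro P hP
  obtain ⟨B, hB, u, D, hDP, hD, hDB⟩ := exists_subset_image_xorShift_of_maximal h𝒜 hP
  obtain ⟨D₁, hD₁D, hD₁, hsmall⟩ :=
    hY B hB _ (image_xorShift_subset_iff.2 hDB) (hD.image_xorShift u)
  refine ⟨xorShift u '' D₁, (image_xorShift_subset_iff.2 hD₁D).trans hDP,
    hD₁.image_xorShift u, fun t => ?_⟩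
  rw [image_xorShift_image]
  exact hsmall _

lemma isContinuumTransitiveSZero_of_forall_mk_lt {𝒜 : Set (Set Cantor)}
    (h𝒜 : Maximal IsSkewFamily 𝒜) {X : Set Cantor}
    (hX : ∀ B ∈ 𝒜, ∀ u, #(xorShift u '' B ∩ X : Set Cantor) < 𝔠) :
    IsContinuumTransitiveSZero X :=
  isContinuumTransitiveSZero_of_maximal h𝒜 fun B hB D hDB hD => ⟨D, subset_rfl, hD, fun v =>
    (Cardinal.mk_le_mk_of_subset (inter_subset_inter_left _ (image_mono hDB))).trans_lt
      (hX B hB v)⟩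

/-- Among the translates of members of a skew family, only `B₀` itself can meet `Y ⊆ B₀`
uncountably, and there `Y` being `𝔠`-s₀ shrinks the perfect set. -/
lemma IsContinuumSZero.isContinuumTransitiveSZero {𝒜 : Set (Set Cantor)}
    (h𝒜 : Maximal IsSkewFamily 𝒜) {B₀ Y : Set Cantor} (hB₀ : B₀ ∈ 𝒜) (hYB₀ : Y ⊆ B₀)
    (hY : IsContinuumSZero Y) : IsContinuumTransitiveSZero Y :=
  isContinuumTransitiveSZero_of_maximal h𝒜 fun B hB D hDB hD => by
    obtain ⟨D₁, hD₁D, hD₁, hsmall⟩ := hY D hD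
    refine ⟨D₁, hD₁D, hD₁, fun v => ?_⟩
    by_cases hv : B = B₀ ∧ v = cZero
    · obtain ⟨-, rfl⟩ := hv
      simpa using hsmall
    · exact ((h𝒜.1.countable_image_xorShift_inter hB hB₀ (not_and_or.1 hv)).mono
        (inter_subset_inter (image_mono (hD₁D.trans hDB)) hYB₀)).mk_lt_continuum

end TransitiveSZero

section SZeroSubsets

lemma exists_transfinite_seq {ι α : Type*} [LT ι] [WellFoundedLT ι] [Nonempty α] (P : α → Prop)
    (R : ∀ i : ι, (∀ j, j < i → α) → α → Prop)
    (step : ∀ i prev, (∀ j h, P (prev j h)) → ∃ a, P a ∧ R i prev a) :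
    ∃ f : ι → α, ∀ i, P (f i) ∧ R i (fun j _ => f j) (f i) := by
  classical
  let f : ι → α := wellFounded_lt.fix fun i prev =>
    if h : ∃ a, P a ∧ R i prev a then h.choose else Classical.arbitrary α
  refine ⟨f, fun i => ?_⟩
  induction i using WellFoundedLT.induction with
  | _ i ih =>
    have hstep := step i (fun j _ => f j) fun j h => (ih j h).1
    rw [show f i = _ from wellFounded_lt.fix_eq _ i, dif_pos hstep]
    exact hstep.choose_spec

lemma mk_union_lt_continuum {α : Type*} {A B : Set α} (hA : #A < 𝔠) (hB : #B < 𝔠) :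
    #(A ∪ B : Set α) < 𝔠 :=
  (Cardinal.mk_union_le A B).trans_lt (Cardinal.add_lt_of_lt Cardinal.aleph0_le_continuum hA hB)

lemma mk_iUnion_lt_continuum {α ι : Type u} {S : ι → Set α} (hι : #ι < 𝔠)
    (hS : ∀ i, (S i).Countable) : #(⋃ i, S i) < 𝔠 :=
  (Cardinal.mk_iUnion_le S).trans_lt <| Cardinal.mul_lt_of_lt Cardinal.aleph0_le_continuum hι <|
    (ciSup_le' fun i => (hS i).le_aleph0).trans_lt Cardinal.aleph0_lt_continuum

lemma exists_forall_countable_inter {V : Cantor → Set Cantor} (hV : Pairwise (Disjoint on V))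
    {ι : Type} {D : ι → Set Cantor} (hι : #ι < 𝔠)
    (hD : ∀ i, (D i).Nonempty ∧ ((∃ w, D i ⊆ V w) ∨ ∀ w, (D i ∩ V w).Countable)) :
    ∃ w, ∀ i, (D i ∩ V w).Countable := by
  have hused : #{w | ∃ i, D i ⊆ V w} < 𝔠 := by
    choose g hg using fun w : {w | ∃ i, D i ⊆ V w} => w.2
    refine (Cardinal.mk_le_of_injective (f := g) fun w w' h => Subtype.ext ?_).trans_lt hι
    by_contra hne
    obtain ⟨x, hx⟩ := (hD (g w)).1
    exact disjoint_left.1 (hV hne) (hg w hx) (hg w' (h ▸ hx))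
  obtain ⟨w, hw⟩ : ∃ w, w ∉ {w | ∃ i, D i ⊆ V w} := by
    by_contra! h
    rw [eq_univ_of_forall h, Cardinal.mk_univ, mk_cantor] at hused
    exact hused.false
  refine ⟨w, fun i => ?_⟩
  rcases (hD i).2 with ⟨w', hw'⟩ | h
  · have hne : w' ≠ w := fun h => hw ⟨i, h ▸ hw'⟩
    rw [((hV hne).mono_left hw').inter_eq]
    exact countable_empty
  · exact h w

lemma PerfectSet.exists_subset_disjoint_of_isClosed {K T : Set Cantor} (hK : PerfectSet K)
    (hT : #T < 𝔠) {V : Cantor → Set Cantor} (hV : ∀ w, IsClosed (V w)) :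
    ∃ E ⊆ K, PerfectSet E ∧ Disjoint E T ∧ ((∃ w, E ⊆ V w) ∨ ∀ w, (E ∩ V w).Countable) := by
  by_cases h : ∃ w, ¬(K ∩ V w).Countable
  · obtain ⟨w, hw⟩ := h
    obtain ⟨K', hK', hK'ne, hK'sub⟩ :=
      exists_perfect_nonempty_of_isClosed_of_not_countable (hK.1.closed.inter (hV w)) hw
    obtain ⟨E, hEK', hE, hET⟩ := PerfectSet.exists_subset_disjoint ⟨hK', hK'ne⟩ hT
    exact ⟨E, hEK'.trans (hK'sub.trans inter_subset_left), hE, hET,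
      Or.inl ⟨w, hEK'.trans (hK'sub.trans inter_subset_right)⟩⟩
  · push Not at h
    obtain ⟨E, hEK, hE, hET⟩ := hK.exists_subset_disjoint hT
    exact ⟨E, hEK, hE, hET, Or.inr fun w => (h w).mono (inter_subset_inter_left _ hEK)⟩

/-- The new point is taken in a piece `V w` that the previous perfect sets meet only countably,
so that it can avoid them. -/
lemma exists_point_perfectSet {Z C₀ K : Set Cantor} {V : Cantor → Set Cantor}
    (hV : ∀ w, PerfectSet (V w) ∧ V w ⊆ C₀) (hVd : Pairwise (Disjoint on V))
    (hZ : ∀ D ⊆ C₀, PerfectSet D → (D ∩ Z).Nonempty) (hK : PerfectSet K) {ι : Type}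
    (hι : #ι < 𝔠) (prev : ι → Cantor × Set Cantor)
    (hprev : ∀ i, PerfectSet (prev i).2 ∧
      ((∃ w, (prev i).2 ⊆ V w) ∨ ∀ w, ((prev i).2 ∩ V w).Countable)) :
    ∃ z E, (PerfectSet E ∧ ((∃ w, E ⊆ V w) ∨ ∀ w, (E ∩ V w).Countable)) ∧ E ⊆ K ∧ z ∈ Z ∧
      z ∉ E ∧ ∀ i, z ∉ (prev i).2 ∧ z ≠ (prev i).1 ∧ (prev i).1 ∉ E := by
  set zs := range fun i => (prev i).1
  have hzs : #zs < 𝔠 := Cardinal.mk_range_le.trans_lt hι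
  obtain ⟨w, hw⟩ := exists_forall_countable_inter hVd hι fun i => ⟨(hprev i).1.2, (hprev i).2⟩
  obtain ⟨W, hWV, hW, hWT⟩ :=
    (hV w).1.exists_subset_disjoint (mk_union_lt_continuum (mk_iUnion_lt_continuum hι hw) hzs)
  obtain ⟨z, hzW, hzZ⟩ := hZ W (hWV.trans (hV w).2) hW
  obtain ⟨E, hEK, hE, hET, hEV⟩ := hK.exists_subset_disjoint_of_isClosed
    (mk_union_lt_continuum ((countable_singleton z).mk_lt_continuum) hzs)
    fun w => (hV w).1.1.closed
  refine ⟨z, E, ⟨hE, hEV⟩, hEK, hzZ, fun hzE => disjoint_left.1 hET hzE (Or.inl rfl),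
    fun i => ⟨fun hz => disjoint_left.1 hWT hzW (Or.inl (mem_iUnion.2 ⟨i, hz, hWV hzW⟩)),
      fun hz => disjoint_left.1 hWT hzW (Or.inr ⟨i, hz.symm⟩),
      fun hE => disjoint_left.1 hET hE (Or.inr ⟨i, rfl⟩)⟩⟩

lemma exists_surjective_perfectSet_subset {ι : Type} (hι : #ι = 𝔠) {C₀ : Set Cantor}
    (hC₀ : PerfectSet C₀) : ∃ e : ι → {K : Set Cantor | K ⊆ C₀ ∧ PerfectSet K}, Surjective e := by
  have : #{K : Set Cantor | K ⊆ C₀ ∧ PerfectSet K} ≤ #ι := by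
    rw [hι]
    exact (Cardinal.mk_le_mk_of_subset fun K hK => hK.2.1.closed).trans mk_setOf_isClosed_le
  obtain ⟨g⟩ := this
  have : Nonempty {K : Set Cantor | K ⊆ C₀ ∧ PerfectSet K} := ⟨⟨C₀, subset_rfl, hC₀⟩⟩
  exact ⟨invFun (⇑g), invFun_surjective g.injective⟩

/-- Enumerate the perfect subsets of `C₀` along `𝔠`; stage `i` picks `z i ∈ Z` and a perfect
subset `D i` of the `i`-th one such that no `z j` lies in `D i`. -/
lemma exists_isContinuumSZero_subset_of_forall_inter_nonempty {Z C₀ : Set Cantor}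
    (hC₀ : PerfectSet C₀) (hZC₀ : Z ⊆ C₀) (hZ : ∀ D ⊆ C₀, PerfectSet D → (D ∩ Z).Nonempty) :
    ∃ Z' ⊆ Z, #Z' = 𝔠 ∧ IsContinuumSZero Z' := by
  obtain ⟨V, hV, hVd⟩ := hC₀.exists_pairwise_disjoint
  obtain ⟨e, he⟩ :=
    exists_surjective_perfectSet_subset (ι := Cardinal.continuum.ord.ToType) (by simp) hC₀
  obtain ⟨f, hf⟩ := exists_transfinite_seq
    (fun a : Cantor × Set Cantor =>
      PerfectSet a.2 ∧ ((∃ w, a.2 ⊆ V w) ∨ ∀ w, (a.2 ∩ V w).Countable))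
    (fun i prev (a : Cantor × Set Cantor) => a.2 ⊆ (e i).1 ∧ a.1 ∈ Z ∧ a.1 ∉ a.2 ∧
      ∀ j h, a.1 ∉ (prev j h).2 ∧ a.1 ≠ (prev j h).1 ∧ (prev j h).1 ∉ a.2)
    fun i prev hprev => by
      obtain ⟨z, E, hE, hEK, hz, hzE, hfresh⟩ := exists_point_perfectSet hV hVd hZ (e i).2.2
        (ι := Iio i) (by simpa using Cardinal.mk_Iio_lt i (by simp))
        (fun j => prev j.1 j.2) fun j => hprev j.1 j.2
      exact ⟨(z, E), hE, hEK, hz, hzE, fun j h => hfresh ⟨j, h⟩⟩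
  have hfZ i : (f i).1 ∈ Z := (hf i).2.2.1
  have hfe i : (f i).2 ⊆ (e i).1 := (hf i).2.1
  have hfself i : (f i).1 ∉ (f i).2 := (hf i).2.2.2.1
  have hfprev {i j} (h : j < i) : (f i).1 ∉ (f j).2 ∧ (f i).1 ≠ (f j).1 ∧ (f j).1 ∉ (f i).2 :=
    (hf i).2.2.2.2 j h
  have hinj : Injective fun i => (f i).1 := fun i j h => by
    by_contra hne
    rcases lt_or_gt_of_ne hne with hlt | hlt
    · exact (hfprev hlt).2.1 h.symm
    · exact (hfprev hlt).2.1 h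
  refine ⟨range fun i => (f i).1, range_subset_iff.2 hfZ, by simp [Cardinal.mk_range_eq _ hinj],
    fun P hP => ?_⟩
  by_cases hPC₀ : (P ∩ C₀).Countable
  · exact ⟨P, subset_rfl, hP, (hPC₀.mono (inter_subset_inter_right _
      (range_subset_iff.2 fun i => hZC₀ (hfZ i)))).mk_lt_continuum⟩
  obtain ⟨K, hK, hKne, hKsub⟩ :=
    exists_perfect_nonempty_of_isClosed_of_not_countable (hP.1.closed.inter hC₀.1.closed) hPC₀
  obtain ⟨i, hi⟩ := he ⟨K, hKsub.trans inter_subset_right, hK, hKne⟩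
  have hempty : (f i).2 ∩ range (fun i => (f i).1) = ∅ := by
    refine eq_empty_of_forall_notMem fun x ⟨hx, j, hj⟩ => ?_
    subst hj
    rcases lt_trichotomy j i with h | rfl | h
    exacts [(hfprev h).2.2 hx, hfself j hx, (hfprev h).1 hx]
  refine ⟨(f i).2, (hfe i).trans (hi ▸ hKsub.trans inter_subset_left), (hf i).1.1, ?_⟩
  simp [hempty, Cardinal.continuum_pos]

lemma exists_isContinuumSZero_subset {Z : Set Cantor} (hZ : #Z = 𝔠) :
    ∃ Z' ⊆ Z, #Z' = 𝔠 ∧ IsContinuumSZero Z' := by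
  by_cases h : IsContinuumSZero Z
  · exact ⟨Z, subset_rfl, hZ, h⟩
  obtain ⟨C₀, hC₀, hcrowd⟩ :
      ∃ C₀, PerfectSet C₀ ∧ ∀ D ⊆ C₀, PerfectSet D → ¬#(D ∩ Z : Set Cantor) < 𝔠 := by
    simpa [IsContinuumSZero] using h
  obtain ⟨Z', hZ'Z, hZ', hs⟩ := exists_isContinuumSZero_subset_of_forall_inter_nonempty hC₀
    (inter_subset_left : C₀ ∩ Z ⊆ C₀) fun D hD hDp => by
      rw [← inter_assoc, inter_eq_left.2 hD]
      exact nonempty_iff_ne_empty.2 fun h => hcrowd D hD hDp (by simp [h, Cardinal.continuum_pos])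
  exact ⟨Z', hZ'Z.trans inter_subset_right, hZ', hs⟩

end SZeroSubsets

theorem exists_isContinuumTransitiveSZero_subset {X : Set Cantor} (hX : #X = 𝔠) :
    ∃ X' ⊆ X, #X' = 𝔠 ∧ IsContinuumTransitiveSZero X' := by
  obtain ⟨𝒜, h𝒜⟩ := exists_maximal_isSkewFamily
  by_cases hsmall : ∀ B ∈ 𝒜, ∀ u, #(xorShift u '' B ∩ X : Set Cantor) < 𝔠
  · exact ⟨X, subset_rfl, hX, isContinuumTransitiveSZero_of_forall_mk_lt h𝒜 hsmall⟩
  push Not at hsmall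
  obtain ⟨B, hB, u, hBX⟩ := hsmall
  obtain ⟨Z, hZ, hZc, hZs⟩ :=
    exists_isContinuumSZero_subset (Z := xorShift u '' (X ∩ xorShift u '' B)) <| by
      rw [mk_image_xorShift, inter_comm]
      exact le_antisymm ((Cardinal.mk_set_le _).trans mk_cantor.le) hBX
  rw [image_xorShift_inter] at hZ
  refine ⟨xorShift u '' Z, ?_, by rw [mk_image_xorShift, hZc],
    (hZs.isContinuumTransitiveSZero h𝒜 hB (hZ.trans inter_subset_right)).image_xorShift u⟩
  exact image_xorShift_subset_iff.2 (hZ.trans inter_subset_left)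

theorem stmt9 (X : Set Cantor) (hX : #X = Cardinal.continuum) :
    ∃ X' ⊆ X, #X' = Cardinal.continuum ∧
      ∀ p, PerfTree p → ∃ q, PerfTree q ∧ q ⊆ p ∧
        ∀ t : Cantor, #((((fun x => cAdd x t) '' body q) ∩ X') : Set Cantor) < Cardinal.continuum := by
  obtain ⟨X', hX'X, hX', htrans⟩ := exists_isContinuumTransitiveSZero_subset hX
  refine ⟨X', hX'X, hX', fun p hp => ?_⟩
  obtain ⟨Q, hQp, hQ, hsmall⟩ := htrans _ hp.perfectSet_body
  refine ⟨treeOf Q, hQ.perfTree_treeOf, treeOf_subset hQp, fun t => ?_⟩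
  rw [body_treeOf hQ.1.closed]
  exact hsmall t
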